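/- There is no modular embedding of gdLg(ask, get, tell) into rLg(ask, get, tell): gdLg(ask, get, tell) ≰ rLg(ask, get, tell). That is, there exist no compositional coder C from the ask/get/tell fragment with guarded lists into the ask/get/tell fragment without guarded lists and element-wise termination-preserving decoder D_el such that for every agent A of gdLg(ask, get, tell), Of(A) = {D_el(x) : x ∈ Of(C(A))}. -/

import Mathlib

namespace Bach

/-- Primitives: the store primitives tell/ask/nask/get over si-terms `I`,
together with graphical primitives from `G`. -/
inductive Prim (I : Type) (G : Type) where
  | tell (t : I)
  | ask (t : I)
  | nask (t : I)
  | get (t : I)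
  | gr (g : G)

/-- A store is a finite multiset of si-terms. -/
abbrev Store (I : Type) := Multiset I

/-- One-step semantics of primitives: `primStep p σ τ` iff `⟨p,σ⟩ → ⟨E,τ⟩`:
`tell(t)` adds `t`; `ask(t)` requires `t` present; `nask(t)` requires `t` absent;
`get(t)` removes one occurrence of `t`; graphical primitives always succeed
leaving the store unchanged. -/
def primStep {I G : Type} : Prim I G → Store I → Store I → Prop
  | .tell t, σ, τ => τ = t ::ₘ σ
  | .ask t, σ, τ => t ∈ σ ∧ τ = σ
  | .nask t, σ, τ => t ∉ σ ∧ τ = σ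
  | .get t, σ, τ => σ = t ::ₘ τ
  | .gr _, σ, τ => τ = σ

/-- Successive execution of a list of primitives. -/
def listExec {I G : Type} : List (Prim I G) → Store I → Store I → Prop
  | [], σ, τ => τ = σ
  | p :: l, σ, τ => ∃ ρ, primStep p σ ρ ∧ listExec l ρ τ

/-- Agents: primitives, guarded lists `[p → p₁,…,pₙ]`, sequential (`;`),
parallel (`∥`) and choice (`+`) composition. -/
inductive Agent (I : Type) (G : Type) where
  | prim (p : Prim I G)
  | glist (p : Prim I G) (l : List (Prim I G))
  | seq (A B : Agent I G)
  | par (A B : Agent I G)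
  | choice (A B : Agent I G)

/-- Transition relation: `Step A σ o τ` means `⟨A,σ⟩ → ⟨o,τ⟩`, where `o = none`
stands for the terminated symbol `E` (and `E;A`, `E∥A`, `A∥E` are identified
with `A`).  A guarded list makes a single transition from `σ` to `τ` iff its
guard makes a transition from `σ` to some `ρ` and executing the remaining
primitives successively from `ρ` ends in `τ`. -/
inductive Step {I G : Type} : Agent I G → Store I → Option (Agent I G) → Store I → Prop
  | prim {p σ τ} : primStep p σ τ → Step (.prim p) σ none τ
  | glist {p l σ ρ τ} : primStep p σ ρ → listExec l ρ τ → Step (.glist p l) σ none τ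
  | seqE {A B σ τ} : Step A σ none τ → Step (.seq A B) σ (some B) τ
  | seqS {A A' B σ τ} : Step A σ (some A') τ → Step (.seq A B) σ (some (.seq A' B)) τ
  | parLE {A B σ τ} : Step A σ none τ → Step (.par A B) σ (some B) τ
  | parLS {A A' B σ τ} : Step A σ (some A') τ → Step (.par A B) σ (some (.par A' B)) τ
  | parRE {A B σ τ} : Step B σ none τ → Step (.par A B) σ (some A) τ
  | parRS {A B B' σ τ} : Step B σ (some B') τ → Step (.par A B) σ (some (.par A B')) τ
  | choiceL {A B σ o τ} : Step A σ o τ → Step (.choice A B) σ o τ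
  | choiceR {A B σ o τ} : Step B σ o τ → Step (.choice A B) σ o τ

/-- Configurations `⟨A,σ⟩`, with `none` standing for the terminated symbol `E`. -/
abbrev Conf (I G : Type) := Option (Agent I G) × Store I

/-- Step relation on configurations. -/
def CStep {I G : Type} : Conf I G → Conf I G → Prop
  | (some A, σ), (o, τ) => Step A σ o τ
  | (none, _), _ => False

/-- Observables `Of(A)`: final stores of finite computations from the empty store,
marked `true` (= δ⁺, success: ending in `E`) or `false` (= δ⁻, deadlock: ending
stuck in some agent `B ≠ E`). -/
def Obs {I G : Type} (A : Agent I G) : Set (Store I × Bool) :=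
  {x | Relation.ReflTransGen CStep ((some A, (0 : Store I)) : Conf I G) (none, x.1) ∧
        x.2 = true}
  ∪ {x | (∃ B, Relation.ReflTransGen CStep ((some A, (0 : Store I)) : Conf I G) (some B, x.1) ∧
          ∀ c, ¬ CStep ((some B, x.1) : Conf I G) c) ∧ x.2 = false}

/-- A language is a set of agents closed under `;`, `∥` and `+`. -/
def IsLanguage {I G : Type} (L : Set (Agent I G)) : Prop :=
  (∀ A B, A ∈ L → B ∈ L → Agent.seq A B ∈ L) ∧
  (∀ A B, A ∈ L → B ∈ L → Agent.par A B ∈ L) ∧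
  (∀ A B, A ∈ L → B ∈ L → Agent.choice A B ∈ L)

/-- `IsModularEmbedding C D L' L`: the coder `C` maps `L'` into `L` and is
compositional w.r.t. `;`, `∥`, `+` (property P₂); the element-wise decoder `D`
preserves the termination mark δ⁺/δ⁻ (property P₃); and for every `A ∈ L'`,
`Of(A) = { D x : x ∈ Of(C A) }` (commuting diagram, with P₁ built in by taking
`D` element-wise). -/
def IsModularEmbedding {I G : Type} (C : Agent I G → Agent I G)
    (D : Store I × Bool → Store I × Bool) (L' L : Set (Agent I G)) : Prop :=
  (∀ A ∈ L', C A ∈ L) ∧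
  (∀ A B, A ∈ L' → B ∈ L' → C (Agent.seq A B) = Agent.seq (C A) (C B)) ∧
  (∀ A B, A ∈ L' → B ∈ L' → C (Agent.par A B) = Agent.par (C A) (C B)) ∧
  (∀ A B, A ∈ L' → B ∈ L' → C (Agent.choice A B) = Agent.choice (C A) (C B)) ∧
  (∀ x, (D x).2 = x.2) ∧
  (∀ A ∈ L', Obs A = D '' Obs (C A))

/-- Modular embedding of `L'` into `L`, written `L' ≤ L`. -/
def ModEmbed {I G : Type} (L' L : Set (Agent I G)) : Prop :=
  ∃ C D, IsModularEmbedding C D L' L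

/-- Kinds of store primitives. -/
inductive PKind where
  | ask | nask | get | tell

/-- The primitive uses only store-primitive kinds from `X`
(graphical primitives are always allowed). -/
def primIn {I G : Type} (X : Set PKind) : Prim I G → Prop
  | .tell _ => PKind.tell ∈ X
  | .ask _ => PKind.ask ∈ X
  | .nask _ => PKind.nask ∈ X
  | .get _ => PKind.get ∈ X
  | .gr _ => True

/-- All primitives occurring in the agent use only kinds from `X`. -/
def agentIn {I G : Type} (X : Set PKind) : Agent I G → Prop
  | .prim p => primIn X p
  | .glist p l => primIn X p ∧ ∀ q ∈ l, primIn X q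
  | .seq A B => agentIn X A ∧ agentIn X B
  | .par A B => agentIn X A ∧ agentIn X B
  | .choice A B => agentIn X A ∧ agentIn X B

/-- The agent contains no guarded list construct. -/
def glFree {I G : Type} : Agent I G → Prop
  | .prim _ => True
  | .glist _ _ => False
  | .seq A B => glFree A ∧ glFree B
  | .par A B => glFree A ∧ glFree B
  | .choice A B => glFree A ∧ glFree B

/-- `gdLg(X)`: the fragment with guarded lists using store primitives from `X`. -/
def gdLg {I G : Type} (X : Set PKind) : Set (Agent I G) := {A | agentIn X A}

/-- `rLg(X)`: the fragment without guarded lists using store primitives from `X`. -/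
def rLg {I G : Type} (X : Set PKind) : Set (Agent I G) := {A | agentIn X A ∧ glFree A}

/-- Computational histories: finite sequences of stores ended by a success mark
δ⁺ (`true`) or deadlock mark δ⁻ (`false`), or infinite sequences of stores. -/
inductive Hist (I : Type) where
  | fin (l : List (Store I)) (success : Bool)
  | inf (f : ℕ → Store I)

/-- History-based operational semantics `Oh(A)(τ)`: the sequences of stores along
maximal transition sequences from `⟨A,τ⟩`, marked δ⁺ if ending in `E`, δ⁻ if
ending stuck in a non-`E` agent, and infinite otherwise. -/
def Oh {I G : Type} (A : Agent I G) (τ : Store I) : Set (Hist I) :=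
  {h | ∃ cs : List (Conf I G),
      cs.Chain' CStep ∧ cs.head? = some (some A, τ) ∧
      (((∃ σ, cs.getLast? = some ((none : Option (Agent I G)), σ)) ∧
          h = Hist.fin (cs.map Prod.snd) true) ∨
       ((∃ B σ, cs.getLast? = some (some B, σ) ∧ ∀ c, ¬ CStep ((some B, σ) : Conf I G) c) ∧
          h = Hist.fin (cs.map Prod.snd) false))}
  ∪ {h | ∃ f : ℕ → Conf I G, f 0 = (some A, τ) ∧ (∀ n, CStep (f n) (f (n + 1))) ∧
      h = Hist.inf fun n => (f n).2}

/-- `Contraction h_c h` (`h_c ⪯ h`): `h_c` is obtained from `h` by removing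
finitely many (possibly zero) stores, never a termination mark. -/
def Contraction {I : Type} : Hist I → Hist I → Prop
  | .fin lc bc, .fin l b => bc = b ∧ lc.Sublist l
  | .inf fc, .inf f =>
      ∃ g : ℕ → ℕ, StrictMono g ∧ (Set.range g)ᶜ.Finite ∧ ∀ n, fc n = f (g n)
  | _, _ => False

/-- `FCon F lc l`: the list `lc` of stores is an F-preserving contraction of `l`:
each removed store `ρ` agrees on `F` with the next kept store. -/
inductive FCon {I : Type} (F : Store I → Prop) : List (Store I) → List (Store I) → Prop
  | nil : FCon F [] []
  | keep {σ lc l} : FCon F lc l → FCon F (σ :: lc) (σ :: l)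
  | drop {σ ρ lc l} : (F ρ ↔ F σ) → FCon F (σ :: lc) l → FCon F (σ :: lc) (ρ :: l)

/-- `FPCon F h_c h` (`h_c ≪_F h`): `h_c` is an F-preserving contraction of `h`:
a contraction in which every removed store agrees on `F` with the next kept store. -/
def FPCon {I : Type} (F : Store I → Prop) : Hist I → Hist I → Prop
  | .fin lc bc, .fin l b => bc = b ∧ FCon F lc l
  | .inf fc, .inf f =>
      ∃ g : ℕ → ℕ, StrictMono g ∧ (Set.range g)ᶜ.Finite ∧ (∀ n, fc n = f (g n)) ∧
        ∀ m, m ∉ Set.range g → ∀ n, m < g n → (∀ k < n, g k < m) → (F (f m) ↔ F (f (g n)))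
  | _, _ => False

/-- Primitives that always succeed without consulting the store:
tell primitives and graphical primitives. -/
def safePrim {I G : Type} : Prim I G → Prop
  | .tell _ => True
  | .gr _ => True
  | _ => False

/-- The sequential composition `p; p₁; ⋯; pₙ` of a nonempty list of primitives. -/
def seqComp {I G : Type} (p : Prim I G) : List (Prim I G) → Agent I G
  | [] => .prim p
  | q :: l => .seq (.prim p) (seqComp q l)

/-- The history contains a store satisfying `F` (reachability of `F`). -/
def histReach {I : Type} (F : Store I → Prop) : Hist I → Prop
  | .fin l _ => ∃ σ ∈ l, F σ
  | .inf f => ∃ n, F (f n)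

/-- A head is a primitive or a guarded list of primitives. -/
def isHead {I G : Type} : Agent I G → Prop
  | .prim _ => True
  | .glist _ _ => True
  | _ => False

/-- Agents in normal form: `N ::= p | p;A | N+N`, where `p` is a primitive
(store-related or graphical) or a guarded list and `A` is an arbitrary agent. -/
inductive NormalForm {I G : Type} : Agent I G → Prop
  | head {p : Agent I G} : isHead p → NormalForm p
  | seq {p A : Agent I G} : isHead p → NormalForm (Agent.seq p A)
  | choice {N₁ N₂ : Agent I G} : NormalForm N₁ → NormalForm N₂ →
      NormalForm (Agent.choice N₁ N₂)

/-- Left merge `⌊`: `p⌊Z = p;Z`, `(p;A)⌊Z = p;(A∥Z)`, `(N₁+N₂)⌊Z = N₁⌊Z + N₂⌊Z`. -/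
def lmerge {I G : Type} : Agent I G → Agent I G → Agent I G
  | .prim p, Z => .seq (.prim p) Z
  | .glist p l, Z => .seq (.glist p l) Z
  | .seq (.prim p) A, Z => .seq (.prim p) (.par A Z)
  | .seq (.glist p l) A, Z => .seq (.glist p l) (.par A Z)
  | .choice N₁ N₂, Z => .choice (lmerge N₁ Z) (lmerge N₂ Z)
  | N, Z => .seq N Z

/-- The normalization translation τ: `τ(p) = p`, `τ(X;Y) = τ(X);Y`,
`τ(X+Y) = τ(X)+τ(Y)`, `τ(X∥Y) = τ(X)⌊Y + τ(Y)⌊X`. -/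
def tauNF {I G : Type} : Agent I G → Agent I G
  | .prim p => .prim p
  | .glist p l => .glist p l
  | .seq X Y => .seq (tauNF X) Y
  | .choice X Y => .choice (tauNF X) (tauNF Y)
  | .par X Y => .choice (lmerge (tauNF X) Y) (lmerge (tauNF Y) X)

end Bach

open Bach

/-!
Without guarded lists and negative asks, agents are monotone in the store: runs survive adding
tokens, and whether an agent can move depends only on which si-terms are present, not on how
often. The guarded list `[get a → get a]` separates one copy of `a` from two. Let a run of the
code of `tell a` end in `σ`. The code of `[get a → get a]` must be stuck in `σ`: a maximal
continuation would otherwise make `tell a; [get a → get a]` succeed or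
`tell a; ([get a → get a] + tell a)` deadlock, and neither can. By monotonicity the code of
`tell a` also runs from `σ` to `σ + σ`, where the code of `[get a → get a]` is still stuck; so
`tell a; tell a; [get a → get a]`, which always succeeds, would deadlock.
-/

namespace Bach

open Relation

variable {I G : Type}

theorem Step.sizeOf_lt {A A' : Agent I G} {σ τ : Store I} (h : Step A σ (some A') τ) :
    sizeOf A' < sizeOf A := by
  generalize ho : some A' = o at h
  induction h generalizing A' with
  | prim _ | glist _ _ => cases ho
  | seqE _ | parLE _ | parRE _ =>
    cases ho
    simp only [Agent.seq.sizeOf_spec, Agent.par.sizeOf_spec]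
    omega
  | seqS _ ih | parLS _ ih | parRS _ ih =>
    cases ho
    have := ih rfl
    simp only [Agent.seq.sizeOf_spec, Agent.par.sizeOf_spec]
    omega
  | choiceL _ ih | choiceR _ ih =>
    have := ih ho
    simp only [Agent.choice.sizeOf_spec]
    omega

theorem CStep.sizeOf_lt {c d : Conf I G} (h : CStep c d) : sizeOf d.1 < sizeOf c.1 := by
  obtain ⟨_ | A, σ⟩ := c
  · exact h.elim
  obtain ⟨_ | A', τ⟩ := d
  · cases A <;> simp
  · simpa using Step.sizeOf_lt h

theorem wellFounded_flip_cStep : WellFounded (flip (CStep : Conf I G → Conf I G → Prop)) :=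
  Subrelation.wf (fun h => CStep.sizeOf_lt h)
    (InvImage.wf (fun c : Conf I G => sizeOf c.1) wellFounded_lt)

theorem exists_reflTransGen_stuck (c : Conf I G) :
    ∃ d, ReflTransGen CStep c d ∧ ∀ e, ¬ CStep d e := by
  obtain ⟨d, hcd, hmin⟩ :=
    wellFounded_flip_cStep.has_min {d | ReflTransGen CStep c d} ⟨c, .refl⟩
  exact ⟨d, hcd, fun e he => hmin e (hcd.tail he) he⟩

def seqConf (B : Agent I G) (c : Conf I G) : Conf I G :=
  (some (c.1.elim B (·.seq B)), c.2)

theorem CStep.seqConf (B : Agent I G) {c d : Conf I G} (h : CStep c d) :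
    CStep (seqConf B c) (seqConf B d) := by
  obtain ⟨_ | A, σ⟩ := c
  · exact h.elim
  obtain ⟨_ | A', τ⟩ := d
  exacts [Step.seqE h, Step.seqS h]

theorem reflTransGen_seq (B : Agent I G) {A : Agent I G} {σ τ : Store I}
    (h : ReflTransGen CStep (some A, σ) (none, τ)) :
    ReflTransGen CStep (some (A.seq B), σ) (some B, τ) :=
  ReflTransGen.lift (seqConf B) (fun _ _ => CStep.seqConf B) _ _ h

def Enabled (A : Agent I G) (σ : Store I) : Prop := ∃ o τ, Step A σ o τ

theorem Enabled.seq {A : Agent I G} {σ : Store I} (h : Enabled A σ) (B : Agent I G) :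
    Enabled (A.seq B) σ := by
  obtain ⟨_ | A', τ, h⟩ := h
  exacts [⟨_, _, .seqE h⟩, ⟨_, _, .seqS h⟩]

theorem Enabled.par_left {A : Agent I G} {σ : Store I} (h : Enabled A σ) (B : Agent I G) :
    Enabled (A.par B) σ := by
  obtain ⟨_ | A', τ, h⟩ := h
  exacts [⟨_, _, .parLE h⟩, ⟨_, _, .parLS h⟩]

theorem Enabled.par_right {B : Agent I G} {σ : Store I} (h : Enabled B σ) (A : Agent I G) :
    Enabled (A.par B) σ := by
  obtain ⟨_ | B', τ, h⟩ := h
  exacts [⟨_, _, .parRE h⟩, ⟨_, _, .parRS h⟩]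

theorem Enabled.choice_left {A : Agent I G} {σ : Store I} (h : Enabled A σ) (B : Agent I G) :
    Enabled (A.choice B) σ :=
  let ⟨_, _, h⟩ := h; ⟨_, _, .choiceL h⟩

theorem Enabled.choice_right {B : Agent I G} {σ : Store I} (h : Enabled B σ) (A : Agent I G) :
    Enabled (A.choice B) σ :=
  let ⟨_, _, h⟩ := h; ⟨_, _, .choiceR h⟩

theorem not_cStep_iff_not_enabled {A : Agent I G} {σ : Store I} :
    (∀ c, ¬ CStep (some A, σ) c) ↔ ¬ Enabled A σ := by
  simp only [Enabled, Prod.forall, not_exists]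
  rfl

theorem eq_of_reflTransGen_none {σ : Store I} {c : Conf I G}
    (h : ReflTransGen CStep (none, σ) c) : c = (none, σ) := by
  rcases h.cases_head with rfl | ⟨_, h, -⟩
  exacts [rfl, h.elim]

theorem mem_obs_true {A : Agent I G} {s : Store I} :
    (s, true) ∈ Obs A ↔ ReflTransGen CStep (some A, 0) (none, s) := by
  simp [Obs]

theorem mem_obs_false {A : Agent I G} {s : Store I} :
    (s, false) ∈ Obs A ↔
      ∃ B, ReflTransGen CStep (some A, 0) (some B, s) ∧ ¬ Enabled B s := by
  simp only [Obs, Set.mem_union, Set.mem_ofPred_eq, Bool.false_eq_true, and_false, and_true,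
    false_or, not_cStep_iff_not_enabled]

section Monotone

variable {X : Set PKind}

theorem primStep_add (hX : PKind.nask ∉ X) {p : Prim I G} (hp : primIn X p) {σ τ : Store I}
    (h : primStep p σ τ) (ρ : Store I) : primStep p (σ + ρ) (τ + ρ) := by
  cases p with
  | tell t => simp only [primStep] at h ⊢; rw [h, Multiset.cons_add]
  | ask t => exact ⟨Multiset.mem_add.2 (.inl h.1), by rw [h.2]⟩
  | nask t => exact (hX hp).elim
  | get t => simp only [primStep] at h ⊢; rw [h, Multiset.cons_add]
  | gr g => simp only [primStep] at h ⊢; rw [h]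

theorem listExec_add (hX : PKind.nask ∉ X) {l : List (Prim I G)} (hl : ∀ q ∈ l, primIn X q)
    {σ τ : Store I} (h : listExec l σ τ) (ρ : Store I) : listExec l (σ + ρ) (τ + ρ) := by
  induction l generalizing σ with
  | nil => simp only [listExec] at h ⊢; rw [h]
  | cons q l ih =>
    obtain ⟨π, hq, hl'⟩ := h
    exact ⟨π + ρ, primStep_add hX (hl q (by simp)) hq ρ,
      ih (fun q' hq' => hl q' (by simp [hq'])) hl'⟩

theorem Step.add_store (hX : PKind.nask ∉ X) {A : Agent I G} (hA : agentIn X A)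
    {σ τ : Store I} {o : Option (Agent I G)} (h : Step A σ o τ) (ρ : Store I) :
    Step A (σ + ρ) o (τ + ρ) := by
  induction h with
  | prim hp => exact .prim (primStep_add hX hA hp ρ)
  | glist hp hl => exact .glist (primStep_add hX hA.1 hp ρ) (listExec_add hX hA.2 hl ρ)
  | seqE _ ih => exact .seqE (ih hA.1)
  | seqS _ ih => exact .seqS (ih hA.1)
  | parLE _ ih => exact .parLE (ih hA.1)
  | parLS _ ih => exact .parLS (ih hA.1)
  | parRE _ ih => exact .parRE (ih hA.2)
  | parRS _ ih => exact .parRS (ih hA.2)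
  | choiceL _ ih => exact .choiceL (ih hA.1)
  | choiceR _ ih => exact .choiceR (ih hA.2)

theorem agentIn_of_step {A A' : Agent I G} (hA : agentIn X A) {σ τ : Store I}
    (h : Step A σ (some A') τ) : agentIn X A' := by
  generalize ho : some A' = o at h
  induction h generalizing A' with
  | prim _ | glist _ _ => cases ho
  | seqE _ | parLE _ => cases ho; exact hA.2
  | parRE _ => cases ho; exact hA.1
  | seqS _ ih | parLS _ ih => cases ho; exact ⟨ih hA.1 rfl, hA.2⟩
  | parRS _ ih => cases ho; exact ⟨hA.1, ih hA.2 rfl⟩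
  | choiceL _ ih => exact ih hA.1 ho
  | choiceR _ ih => exact ih hA.2 ho

theorem reflTransGen_add_store (hX : PKind.nask ∉ X) {A : Agent I G} (hA : agentIn X A)
    {σ τ : Store I} {o : Option (Agent I G)}
    (h : ReflTransGen CStep (some A, σ) (o, τ)) (ρ : Store I) :
    ReflTransGen CStep (some A, σ + ρ) (o, τ + ρ) := by
  suffices ∀ c, ReflTransGen CStep (some A, σ) c →
      ReflTransGen CStep (some A, σ + ρ) (c.1, c.2 + ρ) ∧ ∀ B ∈ c.1, agentIn X B from
    (this _ h).1
  intro c hc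
  induction hc with
  | refl => exact ⟨.refl, fun B hB => by cases hB; exact hA⟩
  | @tail c d _ hcd ih =>
    obtain ⟨_ | B, π⟩ := c
    · exact hcd.elim
    obtain ⟨o', π'⟩ := d
    have hB := ih.2 B rfl
    refine ⟨ih.1.tail (Step.add_store hX hB hcd ρ), ?_⟩
    rintro B' rfl
    exact agentIn_of_step hB hcd

theorem exists_primStep_of_subset (hX : PKind.nask ∉ X) {p : Prim I G} (hp : primIn X p)
    {σ σ' τ : Store I} (h : primStep p σ τ) (hσ : σ ⊆ σ') :
    ∃ τ', primStep p σ' τ' := by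
  cases p with
  | tell t => exact ⟨_, rfl⟩
  | ask t => exact ⟨σ', hσ h.1, rfl⟩
  | nask t => exact (hX hp).elim
  | get t =>
    have hσt : σ = t ::ₘ τ := h
    exact Multiset.exists_cons_of_mem (hσ (hσt ▸ Multiset.mem_cons_self t τ))
  | gr g => exact ⟨σ', rfl⟩

theorem Step.enabled_of_subset (hX : PKind.nask ∉ X) {A : Agent I G} (hA : agentIn X A)
    (hg : glFree A) {σ σ' τ : Store I} {o : Option (Agent I G)} (h : Step A σ o τ)
    (hσ : σ ⊆ σ') : Enabled A σ' := by
  induction h with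
  | prim hp =>
    obtain ⟨τ', h'⟩ := exists_primStep_of_subset hX hA hp hσ
    exact ⟨_, _, .prim h'⟩
  | glist _ _ => exact hg.elim
  | seqE _ ih | seqS _ ih => exact (ih hA.1 hg.1 hσ).seq _
  | parLE _ ih | parLS _ ih => exact (ih hA.1 hg.1 hσ).par_left _
  | parRE _ ih | parRS _ ih => exact (ih hA.2 hg.2 hσ).par_right _
  | choiceL _ ih => exact (ih hA.1 hg.1 hσ).choice_left _
  | choiceR _ ih => exact (ih hA.2 hg.2 hσ).choice_right _

end Monotone

abbrev tellAgent (t : I) : Agent I G := .prim (.tell t)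

def getTwice (t : I) : Agent I G := .glist (.get t) [.get t]

theorem cStep_tellAgent_seq_iff {t : I} {B : Agent I G} {σ : Store I} {c : Conf I G} :
    CStep (some ((tellAgent t).seq B), σ) c ↔ c = (some B, t ::ₘ σ) := by
  obtain ⟨o, τ⟩ := c
  constructor
  · intro h
    cases h with
    | seqE h => cases h with | prim h => rw [show τ = t ::ₘ σ from h]
    | seqS h => cases h
  · rintro ⟨⟩
    exact Step.seqE (.prim rfl)

theorem reflTransGen_tellAgent_seq {t : I} {B : Agent I G} {σ : Store I} {c : Conf I G}
    (h : ReflTransGen CStep (some ((tellAgent t).seq B), σ) c) :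
    c = (some ((tellAgent t).seq B), σ) ∨ ReflTransGen CStep (some B, t ::ₘ σ) c := by
  rcases h.cases_head with h | ⟨d, hd, h⟩
  · exact .inl h.symm
  · exact .inr (cStep_tellAgent_seq_iff.1 hd ▸ h)

theorem Step.eq_none_of_glist {p : Prim I G} {l : List (Prim I G)} {σ τ : Store I}
    {o : Option (Agent I G)} (h : Step (.glist p l) σ o τ) : o = none := by
  cases h
  rfl

theorem not_enabled_getTwice_singleton (t : I) : ¬ Enabled (getTwice t : Agent I G) {t} := by
  rintro ⟨o, τ, h⟩
  cases h with
  | glist hp hl =>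
    obtain rfl : _ = 0 := ((Multiset.cons_inj_right t).1 hp).symm
    obtain ⟨ρ, hρ, -⟩ := hl
    exact Multiset.cons_ne_zero hρ.symm

theorem step_getTwice_pair (t : I) : Step (getTwice t : Agent I G) {t, t} none 0 :=
  .glist rfl ⟨0, rfl, rfl⟩

theorem not_mem_obs_tellAgent_seq_getTwice_true (t : I) (s : Store I) :
    (s, true) ∉ Obs ((tellAgent t).seq (getTwice t) : Agent I G) := by
  rw [mem_obs_true]
  intro h
  rcases reflTransGen_tellAgent_seq h with h | h
  · cases h
  rcases h.cases_head with h | ⟨⟨o, τ⟩, hc, -⟩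
  · cases h
  · exact not_enabled_getTwice_singleton t ⟨o, τ, hc⟩

theorem not_mem_obs_tellAgent_seq_getTwice_choice_false (t : I) (s : Store I) :
    (s, false) ∉ Obs ((tellAgent t).seq ((getTwice t).choice (tellAgent t)) : Agent I G) := by
  rw [mem_obs_false]
  rintro ⟨B, h, hB⟩
  rcases reflTransGen_tellAgent_seq h with h | h
  · cases h
    exact hB ⟨_, _, .seqE (.prim rfl)⟩
  rcases h.cases_head with h | ⟨⟨o, τ⟩, hc, h⟩
  · cases h
    exact hB ⟨_, _, .choiceR (.prim rfl)⟩
  cases hc with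
  | choiceL hc => exact not_enabled_getTwice_singleton t ⟨o, τ, hc⟩
  | choiceR hc =>
    cases hc
    cases eq_of_reflTransGen_none h

theorem not_mem_obs_tellAgent_seq_tellAgent_seq_getTwice_false (t : I) (s : Store I) :
    (s, false) ∉ Obs ((tellAgent t).seq ((tellAgent t).seq (getTwice t)) : Agent I G) := by
  rw [mem_obs_false]
  rintro ⟨B, h, hB⟩
  rcases reflTransGen_tellAgent_seq h with h | h
  · cases h
    exact hB ⟨_, _, .seqE (.prim rfl)⟩
  rcases reflTransGen_tellAgent_seq h with h | h
  · cases h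
    exact hB ⟨_, _, .seqE (.prim rfl)⟩
  rcases h.cases_head with h | ⟨⟨o, τ⟩, hc, h⟩
  · cases h
    exact hB ⟨_, _, step_getTwice_pair t⟩
  cases hc.eq_none_of_glist
  cases eq_of_reflTransGen_none h

theorem IsModularEmbedding.exists_mem_obs_iff {C : Agent I G → Agent I G}
    {D : Store I × Bool → Store I × Bool} {L' L : Set (Agent I G)}
    (hE : IsModularEmbedding C D L' L) {A : Agent I G} (hA : A ∈ L') (m : Bool) :
    (∃ s, (s, m) ∈ Obs A) ↔ ∃ s, (s, m) ∈ Obs (C A) := by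
  obtain ⟨-, -, -, -, hD, hobs⟩ := hE
  rw [hobs A hA]
  constructor
  · rintro ⟨s, ⟨s', m'⟩, hx, hDx⟩
    obtain rfl : m' = m := by simpa [hDx] using (hD (s', m')).symm
    exact ⟨s', hx⟩
  · rintro ⟨s, hs⟩
    exact ⟨(D (s, m)).1, _, hs, Prod.ext rfl (hD (s, m))⟩

section Embedding

variable {X : Set PKind}

theorem tellAgent_mem_gdLg (htell : PKind.tell ∈ X) (t : I) :
    (tellAgent t : Agent I G) ∈ gdLg X :=
  htell

theorem getTwice_mem_gdLg (hget : PKind.get ∈ X) (t : I) : (getTwice t : Agent I G) ∈ gdLg X :=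
  ⟨hget, by simpa [primIn] using hget⟩

theorem IsModularEmbedding.not_enabled_getTwice {C : Agent I G → Agent I G}
    {D : Store I × Bool → Store I × Bool} (hE : IsModularEmbedding C D (gdLg X) (rLg X))
    (htell : PKind.tell ∈ X) (hget : PKind.get ∈ X) {t : I} {σ : Store I}
    (hσ : ReflTransGen CStep (some (C (tellAgent t)), 0) (none, σ)) :
    ¬ Enabled (C (getTwice t)) σ := by
  have ⟨_, hseq, _, hchoice, _, _⟩ := hE
  rintro ⟨o, τ, h⟩
  have hT := tellAgent_mem_gdLg (G := G) htell t
  have hL := getTwice_mem_gdLg (G := G) hget t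
  have hTL : (tellAgent t).seq (getTwice t) ∈ gdLg X := ⟨hT, hL⟩
  have hLT : (getTwice t).choice (tellAgent t) ∈ gdLg X := ⟨hL, hT⟩
  have hTLT : (tellAgent t).seq ((getTwice t).choice (tellAgent t)) ∈ gdLg X := ⟨hT, hLT⟩
  obtain ⟨⟨_ | B, s⟩, hrun, hstuck⟩ := exists_reflTransGen_stuck (o, τ)
  · have hsucc : (s, true) ∈ Obs (C ((tellAgent t).seq (getTwice t))) := by
      rw [mem_obs_true, hseq _ _ hT hL]
      exact (reflTransGen_seq _ hσ).trans (.head (b := (o, τ)) h hrun)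
    obtain ⟨s', hs'⟩ := (hE.exists_mem_obs_iff hTL true).2 ⟨s, hsucc⟩
    exact not_mem_obs_tellAgent_seq_getTwice_true t s' hs'
  · have hdead :
        (s, false) ∈ Obs (C ((tellAgent t).seq ((getTwice t).choice (tellAgent t)))) := by
      rw [mem_obs_false, hseq _ _ hT hLT, hchoice _ _ hL hT]
      exact ⟨B, (reflTransGen_seq _ hσ).trans (.head (b := (o, τ)) (Step.choiceL h) hrun),
        not_cStep_iff_not_enabled.1 hstuck⟩
    obtain ⟨s', hs'⟩ := (hE.exists_mem_obs_iff hTLT false).2 ⟨s, hdead⟩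
    exact not_mem_obs_tellAgent_seq_getTwice_choice_false t s' hs'

theorem not_modEmbed_gdLg_rLg (hX : PKind.nask ∉ X) (htell : PKind.tell ∈ X)
    (hget : PKind.get ∈ X) (a : I) : ¬ ModEmbed (gdLg X : Set (Agent I G)) (rLg X) := by
  rintro ⟨C, D, hE⟩
  have ⟨hcode, hseq, _, _, _, _⟩ := hE
  have hT := tellAgent_mem_gdLg (G := G) htell a
  have hL := getTwice_mem_gdLg (G := G) hget a
  have hTL : (tellAgent a).seq (getTwice a) ∈ gdLg X := ⟨hT, hL⟩
  have hTTL : (tellAgent a).seq ((tellAgent a).seq (getTwice a)) ∈ gdLg X := ⟨hT, hTL⟩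
  obtain ⟨σ, hσ⟩ :=
    (hE.exists_mem_obs_iff hT true).1 ⟨_, mem_obs_true.2 (.single (Step.prim rfl))⟩
  rw [mem_obs_true] at hσ
  have hCT : C (tellAgent a) ∈ rLg X := hcode _ hT
  have hCL : C (getTwice a) ∈ rLg X := hcode _ hL
  have hstuck : ¬ Enabled (C (getTwice a)) (σ + σ) := fun ⟨_, _, h⟩ =>
    hE.not_enabled_getTwice htell hget hσ
      (h.enabled_of_subset hX hCL.1 hCL.2 fun _ ht => (Multiset.mem_add.1 ht).elim id id)
  have hdead :
      (σ + σ, false) ∈ Obs (C ((tellAgent a).seq ((tellAgent a).seq (getTwice a)))) := by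
    rw [mem_obs_false, hseq _ _ hT hTL, hseq _ _ hT hL]
    refine ⟨_, (reflTransGen_seq _ hσ).trans (reflTransGen_seq _ ?_), hstuck⟩
    simpa using reflTransGen_add_store hX hCT.1 hσ σ
  obtain ⟨s, hs⟩ := (hE.exists_mem_obs_iff hTTL false).2 ⟨_, hdead⟩
  exact not_mem_obs_tellAgent_seq_tellAgent_seq_getTwice_false a s hs

end Embedding

end Bach

theorem no_modEmbed_ask_get_tell_general (I G : Type) (a : I) :
    ¬ ModEmbed (gdLg ({PKind.ask, PKind.get, PKind.tell} : Set PKind) : Set (Agent I G))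
        (rLg ({PKind.ask, PKind.get, PKind.tell} : Set PKind)) :=
  not_modEmbed_gdLg_rLg (by simp) (by simp) (by simp) a

/-- there is no modular embedding of `gdLg(ask, get, tell)` into
`rLg(ask, get, tell)` (assuming at least two distinct si-terms). -/
theorem no_modEmbed_ask_get_tell (I G : Type) (a b : I) (hab : a ≠ b) :
    ¬ ModEmbed (gdLg ({PKind.ask, PKind.get, PKind.tell} : Set PKind) : Set (Agent I G))
        (rLg ({PKind.ask, PKind.get, PKind.tell} : Set PKind)) :=
  no_modEmbed_ask_get_tell_general I G a
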